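/- Let ν be an atomless probability measure on a measurable space Ω, let S ⊆ Ω be measurable, and let n ∈ ℕ. Then there exists a partition of Ω into measurable sets D_1, …, D_{2^n}, pairwise disjoint with union Ω and ν(D_k) = 2^{-n} for all k, such that at least ⌊2^n · ν(S)⌋ of the sets D_k satisfy ν(D_k \ S) = 0 and at least ⌊2^n · ν(Ω \ S)⌋ of the sets D_k satisfy ν(D_k ∩ S) = 0. -/

import Mathlib

open MeasureTheory
open scoped ENNReal

attribute [local instance] Classical.propDecidable

/-!
By Sierpiński's theorem an atomless finite measure takes every value in `[0, ν A]` on measurable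
subsets of `A`. Hence one can carve `m = ⌊2ⁿ ν S⌋` disjoint pieces of measure `2⁻ⁿ` out of `S`,
`m' = ⌊2ⁿ ν Sᶜ⌋` out of `Sᶜ`, and the remaining `2ⁿ - m - m'` pieces out of what is left of `Ω`.
These `2ⁿ` pieces exhaust `Ω` up to a null set, which is then absorbed into one of them.

For Sierpiński's theorem, a greedy exhaustion gives a subset `B ⊆ A` with `ν B ≤ r` that is
measure-maximal among such sets; `ν B < r` is impossible because atomlessness provides subsets
of `A \ B` of arbitrarily small positive measure.
-/

open Set Function

def IsAtomless {Ω : Type*} [MeasurableSpace Ω] (ν : Measure Ω) : Prop :=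
  ∀ A : Set Ω, MeasurableSet A → 0 < ν A → ∃ B ⊆ A, MeasurableSet B ∧ 0 < ν B ∧ ν B < ν A

theorem Fin.pairwise_append {α : Type*} {r : α → α → Prop} [Std.Symm r] {m n : ℕ}
    {f : Fin m → α} {g : Fin n → α} (hf : Pairwise (r on f)) (hg : Pairwise (r on g))
    (hfg : ∀ i j, r (f i) (g j)) : Pairwise (r on Fin.append f g) := by
  intro i j hij
  induction i using Fin.addCases <;> induction j using Fin.addCases <;>
    simp only [onFun, Fin.append_left, Fin.append_right]
  · exact hf fun h ↦ hij (congrArg _ h)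
  · exact hfg _ _
  · exact Std.Symm.symm _ _ (hfg _ _)
  · exact hg fun h ↦ hij (congrArg _ h)

section

variable {α : Type*} [MeasurableSpace α] {μ : Measure α}

theorem measure_iUnion_eq_card_mul {ι : Type*} [Fintype ι] {E : ι → Set α}
    (hEm : ∀ i, MeasurableSet (E i)) (hE : Pairwise (Disjoint on E)) {c : ℝ≥0∞}
    (hc : ∀ i, μ (E i) = c) : μ (⋃ i, E i) = Fintype.card ι * c := by
  simp [measure_iUnion hE hEm, tsum_fintype, hc]

theorem exists_superset_measure_le_add [IsFiniteMeasure μ] {𝒜 : Set (Set α)} {s : Set α}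
    (hs : s ∈ 𝒜) {ε : ℝ≥0∞} (hε : ε ≠ 0) :
    ∃ t ∈ 𝒜, s ⊆ t ∧ ∀ u ∈ 𝒜, s ⊆ u → μ u ≤ μ t + ε := by
  have : Nonempty {u // u ∈ 𝒜 ∧ s ⊆ u} := ⟨⟨s, hs, subset_rfl⟩⟩
  set M := ⨆ u : {u // u ∈ 𝒜 ∧ s ⊆ u}, μ u
  have hM : M ≠ ∞ := ne_top_of_le_ne_top (measure_ne_top μ univ)
    (iSup_le fun u ↦ measure_mono (subset_univ _))
  have hMε : M < ⨆ u : {u // u ∈ 𝒜 ∧ s ⊆ u}, μ u + ε := by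
    rw [← ENNReal.iSup_add]; exact ENNReal.lt_add_right hM hε
  obtain ⟨⟨t, ht, hst⟩, hMt⟩ := lt_iSup_iff.1 hMε
  exact ⟨t, ht, hst, fun u hu hsu ↦
    (le_iSup (fun u : {u // u ∈ 𝒜 ∧ s ⊆ u} ↦ μ u) ⟨u, hu, hsu⟩).trans hMt.le⟩

theorem exists_superset_measure_maximal [IsFiniteMeasure μ] {𝒜 : Set (Set α)}
    (h𝒜 : ∀ f : ℕ → Set α, Monotone f → (∀ k, f k ∈ 𝒜) → ⋃ k, f k ∈ 𝒜) {s : Set α}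
    (hs : s ∈ 𝒜) :
    ∃ t ∈ 𝒜, s ⊆ t ∧ ∀ u ∈ 𝒜, t ⊆ u → μ u ≤ μ t := by
  choose! g hg𝒜 hgsub hgmax using fun t (ht : t ∈ 𝒜) (k : ℕ) ↦
    exists_superset_measure_le_add (μ := μ) ht (ENNReal.inv_ne_zero.2 (ENNReal.natCast_ne_top k))
  let f : ℕ → Set α := fun k ↦ Nat.rec s (fun k t ↦ g t k) k
  have hf𝒜 : ∀ k, f k ∈ 𝒜 := fun k ↦ by
    induction k with
    | zero => exact hs
    | succ k ih => exact hg𝒜 _ ih k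
  have hf : Monotone f := monotone_nat_of_le_succ fun k ↦ hgsub _ (hf𝒜 k) k
  refine ⟨⋃ k, f k, h𝒜 f hf hf𝒜, subset_iUnion f 0, fun u hu htu ↦ ?_⟩
  have hu : ∀ k : ℕ, μ u ≤ μ (⋃ k, f k) + (k : ℝ≥0∞)⁻¹ := fun k ↦
    (hgmax _ (hf𝒜 k) k u hu ((subset_iUnion f k).trans htu)).trans
      (by gcongr; exact subset_iUnion f (k + 1))
  simpa using ge_of_tendsto' (ENNReal.tendsto_inv_nat_nhds_zero.const_add _) hu

theorem exists_partition_ae_eq {ι : Type*} [Countable ι] (i₀ : ι) {E : ι → Set α}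
    (hEm : ∀ i, MeasurableSet (E i)) (hE : Pairwise (Disjoint on E))
    (hE_null : μ (⋃ i, E i)ᶜ = 0) :
    ∃ D : ι → Set α, (∀ i, MeasurableSet (D i)) ∧ Pairwise (Disjoint on D) ∧
      (⋃ i, D i) = univ ∧ ∀ i, D i =ᵐ[μ] E i := by
  set L := (⋃ i, E i)ᶜ
  have hLE : ∀ i, Disjoint L (E i) := fun i ↦ disjoint_compl_left.mono_right (subset_iUnion E i)
  set D : ι → Set α := fun i ↦ if i = i₀ then E i ∪ L else E i
  have hD₀ : D i₀ = E i₀ ∪ L := if_pos rfl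
  have hD_ne : ∀ i ≠ i₀, D i = E i := fun i hi ↦ if_neg hi
  have hE_sub : ∀ i, E i ⊆ D i := fun i ↦ by by_cases hi : i = i₀ <;> simp [D, hi]
  have hD_sub : ∀ i, D i ⊆ E i ∪ L := fun i ↦ by by_cases hi : i = i₀ <;> simp [D, hi]
  refine ⟨D, fun i ↦ ?_, fun i j hij ↦ ?_, ?_, fun i ↦ ?_⟩
  · by_cases hi : i = i₀
    · exact hi ▸ hD₀ ▸ (hEm i₀).union (MeasurableSet.iUnion hEm).compl
    · exact hD_ne i hi ▸ hEm i
  · have key : ∀ i j, i ≠ j → j ≠ i₀ → Disjoint (D i) (D j) := fun i j hij hj ↦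
      (hD_ne j hj).symm ▸ (disjoint_union_left.2 ⟨hE hij, hLE j⟩).mono_left (hD_sub i)
    by_cases hj : j = i₀
    · exact (key j i hij.symm (hj ▸ hij)).symm
    · exact key i j hij hj
  · refine eq_univ_of_forall fun x ↦ ?_
    by_cases hx : x ∈ ⋃ i, E i
    · obtain ⟨i, hi⟩ := mem_iUnion.1 hx
      exact mem_iUnion.2 ⟨i, hE_sub i hi⟩
    · exact mem_iUnion.2 ⟨i₀, hD₀ ▸ Or.inr hx⟩
  · by_cases hi : i = i₀
    · exact hi ▸ hD₀ ▸ union_ae_eq_left_of_ae_eq_empty (ae_eq_empty.2 hE_null)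
    · exact .of_eq (hD_ne i hi)

end

section

variable {Ω : Type*} [MeasurableSpace Ω] {ν : Measure Ω}

theorem IsAtomless.exists_subset_measure_pos_lt (hν : IsAtomless ν) {A : Set Ω}
    (hA : MeasurableSet A) (hA0 : 0 < ν A) (hA_top : ν A ≠ ∞) {ε : ℝ≥0∞} (hε : 0 < ε) :
    ∃ B ⊆ A, MeasurableSet B ∧ 0 < ν B ∧ ν B < ε := by
  set δ := ⨅ B : {B // B ⊆ A ∧ MeasurableSet B ∧ 0 < ν B}, ν B
  suffices hδ : δ = 0 by
    obtain ⟨⟨B, hBA, hBm, hB0⟩, hBε⟩ := iInf_lt_iff.1 (hδ ▸ hε : δ < ε)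
    exact ⟨B, hBA, hBm, hB0, hBε⟩
  by_contra hδ
  have hδ_top : δ ≠ ∞ :=
    ne_top_of_le_ne_top hA_top (iInf_le_of_le ⟨A, subset_rfl, hA, hA0⟩ le_rfl)
  -- a set of measure `< 2δ` cannot split into two sets of positive measure, each `≥ δ`
  obtain ⟨⟨B, hBA, hBm, hB0⟩, hBδ⟩ := iInf_lt_iff.1 (ENNReal.lt_add_right hδ_top hδ)
  obtain ⟨C, hCB, hCm, hC0, hCν⟩ := hν B hBm hB0
  have hδ_le : ∀ D ⊆ A, MeasurableSet D → 0 < ν D → δ ≤ ν D := fun D hDA hDm hD0 ↦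
    iInf_le_of_le ⟨D, hDA, hDm, hD0⟩ le_rfl
  have hBC0 : 0 < ν (B \ C) := (tsub_pos_of_lt hCν).trans_le le_measure_sdiff
  have hδB : δ + δ ≤ ν B := calc
    δ + δ ≤ ν C + ν (B \ C) := add_le_add (hδ_le C (hCB.trans hBA) hCm hC0)
      (hδ_le _ (sdiff_subset.trans hBA) (hBm.diff hCm) hBC0)
    _ = ν B := by rw [measure_add_sdiff hCm.nullMeasurableSet, union_eq_self_of_subset_left hCB]
  exact (hBδ.trans_le hδB).false

theorem IsAtomless.exists_subset_measure_eq [IsFiniteMeasure ν] (hν : IsAtomless ν) {A : Set Ω}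
    (hA : MeasurableSet A) {r : ℝ≥0∞} (hr : r ≤ ν A) : ∃ B ⊆ A, MeasurableSet B ∧ ν B = r := by
  let 𝒜 : Set (Set Ω) := {B | B ⊆ A ∧ MeasurableSet B ∧ ν B ≤ r}
  have h𝒜 : ∀ f : ℕ → Set Ω, Monotone f → (∀ k, f k ∈ 𝒜) → ⋃ k, f k ∈ 𝒜 := fun f hf hf𝒜 ↦
    ⟨iUnion_subset fun k ↦ (hf𝒜 k).1, .iUnion fun k ↦ (hf𝒜 k).2.1,
      hf.measure_iUnion ▸ iSup_le fun k ↦ (hf𝒜 k).2.2⟩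
  obtain ⟨B, ⟨hBA, hBm, hBr⟩, -, hBmax⟩ :=
    exists_superset_measure_maximal (μ := ν) h𝒜 (s := ∅) ⟨empty_subset A, .empty, by simp⟩
  refine ⟨B, hBA, hBm, hBr.antisymm (not_lt.1 fun hBr ↦ ?_)⟩
  obtain ⟨F, hFAB, hFm, hF0, hFr⟩ := hν.exists_subset_measure_pos_lt (hA.diff hBm)
    ((tsub_pos_of_lt (hBr.trans_le hr)).trans_le le_measure_sdiff) (measure_ne_top ν _)
    (tsub_pos_of_lt hBr)
  have hBF : ν (B ∪ F) = ν B + ν F := measure_union (disjoint_sdiff_right.mono_right hFAB) hFm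
  have hBF_le := hBmax (B ∪ F) ⟨union_subset hBA (hFAB.trans sdiff_subset), hBm.union hFm,
    hBF ▸ (lt_tsub_iff_left.1 hFr).le⟩ subset_union_left
  exact (ENNReal.lt_add_right (measure_ne_top ν B) hF0.ne').not_ge (hBF ▸ hBF_le)

theorem IsAtomless.exists_pairwise_disjoint_measure_eq [IsFiniteMeasure ν] (hν : IsAtomless ν)
    (c : ℝ≥0∞) (m : ℕ) {A : Set Ω} (hA : MeasurableSet A) (hm : m * c ≤ ν A) :
    ∃ E : Fin m → Set Ω, (∀ i, E i ⊆ A) ∧ (∀ i, MeasurableSet (E i)) ∧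
      Pairwise (Disjoint on E) ∧ ∀ i, ν (E i) = c := by
  induction m generalizing A with
  | zero => exact ⟨finZeroElim, finZeroElim, finZeroElim, fun i ↦ i.elim0, finZeroElim⟩
  | succ m ih =>
    rw [Nat.cast_succ, add_one_mul] at hm
    obtain ⟨E₀, hE₀A, hE₀m, hE₀c⟩ := hν.exists_subset_measure_eq hA (le_add_self.trans hm)
    have hc : c ≠ ∞ := hE₀c ▸ measure_ne_top ν E₀
    obtain ⟨E, hEA, hEm, hE, hEc⟩ := ih (hA.diff hE₀m) <| by
      rw [measure_sdiff hE₀A hE₀m.nullMeasurableSet (hE₀c ▸ hc), hE₀c]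
      exact ENNReal.le_sub_of_add_le_right hc hm
    refine ⟨Fin.append E fun _ ↦ E₀, Fin.addCases ?_ ?_, Fin.addCases ?_ ?_,
      Fin.pairwise_append hE (fun i j h ↦ (h (Subsingleton.elim i j)).elim)
        fun i _ ↦ disjoint_sdiff_left.mono_left (hEA i), Fin.addCases ?_ ?_⟩ <;>
      intro i <;> simp only [Fin.append_left, Fin.append_right]
    exacts [(hEA i).trans sdiff_subset, hE₀A, hEm i, hE₀m, hEc i, hE₀c]

theorem IsAtomless.exists_pairwise_disjoint_measure_eq_of_subset_compl [IsFiniteMeasure ν]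
    (hν : IsAtomless ν) {S : Set Ω} (hS : MeasurableSet S) {c : ℝ≥0∞} {m m' r : ℕ}
    (hm : m * c ≤ ν S) (hm' : m' * c ≤ ν Sᶜ) (htotal : ((m + m' + r : ℕ) : ℝ≥0∞) * c ≤ ν univ) :
    ∃ G : Fin (m + m' + r) → Set Ω, (∀ k, MeasurableSet (G k)) ∧ Pairwise (Disjoint on G) ∧
      (∀ k, ν (G k) = c) ∧ (∀ i, G (Fin.castAdd r (Fin.castAdd m' i)) ⊆ S) ∧
      ∀ j, G (Fin.castAdd r (Fin.natAdd m j)) ⊆ Sᶜ := by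
  obtain ⟨E, hES, hEm, hE, hEc⟩ := hν.exists_pairwise_disjoint_measure_eq c m hS hm
  obtain ⟨E', hE'S, hE'm, hE', hE'c⟩ := hν.exists_pairwise_disjoint_measure_eq c m' hS.compl hm'
  set G₀ := Fin.append E E'
  have hG₀m : ∀ k, MeasurableSet (G₀ k) := Fin.addCases (by simpa [G₀]) (by simpa [G₀])
  have hG₀c : ∀ k, ν (G₀ k) = c := Fin.addCases (by simpa [G₀]) (by simpa [G₀])
  have hG₀ : Pairwise (Disjoint on G₀) :=
    Fin.pairwise_append hE hE' fun i j ↦ disjoint_compl_right.mono (hES i) (hE'S j)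
  obtain ⟨F, hFG₀, hFm, hF, hFc⟩ := hν.exists_pairwise_disjoint_measure_eq c r
    (MeasurableSet.iUnion hG₀m).compl <| by
      rw [measure_compl (.iUnion hG₀m) (measure_ne_top ν _),
        measure_iUnion_eq_card_mul hG₀m hG₀ hG₀c, Fintype.card_fin]
      rw [Nat.cast_add, add_mul] at htotal
      exact ENNReal.le_sub_of_add_le_left (ne_top_of_le_ne_top (measure_ne_top ν univ)
        (le_self_add.trans htotal)) htotal
  refine ⟨Fin.append G₀ F, Fin.addCases (by simpa) (by simpa),
    Fin.pairwise_append hG₀ hF fun k l ↦ ?_, Fin.addCases (by simpa) (by simpa),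
    fun i ↦ by simpa [G₀] using hES i, fun j ↦ by simpa [G₀] using hE'S j⟩
  exact (disjoint_compl_right.mono_left (subset_iUnion G₀ k)).mono_right (hFG₀ l)

theorem IsAtomless.exists_partition_measure_eq_adapted [IsFiniteMeasure ν] [NeZero ν]
    (hν : IsAtomless ν) {S : Set Ω} (hS : MeasurableSet S) {N : ℕ} {c : ℝ≥0∞}
    (hN : N * c = ν univ) {m m' : ℕ} (hm : m * c ≤ ν S) (hm' : m' * c ≤ ν Sᶜ) :
    ∃ D : Fin N → Set Ω, (∀ k, MeasurableSet (D k)) ∧ Pairwise (Disjoint on D) ∧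
      (⋃ k, D k) = univ ∧ (∀ k, ν (D k) = c) ∧
      m ≤ (Finset.univ.filter fun k ↦ ν (D k \ S) = 0).card ∧
      m' ≤ (Finset.univ.filter fun k ↦ ν (D k ∩ S) = 0).card := by
  have hν0 : ν univ ≠ 0 := Measure.measure_univ_ne_zero.2 (NeZero.ne ν)
  have hN0 : N ≠ 0 := by rintro rfl; exact hν0 (by simpa using hN.symm)
  have hc0 : c ≠ 0 := by rintro rfl; exact hν0 (by simpa using hN.symm)
  have hc : c ≠ ∞ := by rintro rfl; exact measure_ne_top ν univ (by simpa [hN0] using hN.symm)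
  have hmm' : m + m' ≤ N := by
    rw [← Nat.cast_le (α := ℝ≥0∞), ← ENNReal.mul_le_mul_iff_left hc0 hc, hN,
      ← measure_add_measure_compl hS, Nat.cast_add, add_mul]
    exact add_le_add hm hm'
  obtain ⟨r, rfl⟩ := Nat.exists_eq_add_of_le hmm'
  obtain ⟨G, hGm, hG, hGc, hGS, hGS'⟩ :=
    hν.exists_pairwise_disjoint_measure_eq_of_subset_compl hS hm hm' hN.le
  obtain ⟨D, hDm, hD, hDU, hDG⟩ := exists_partition_ae_eq (μ := ν) ⟨0, Nat.pos_of_ne_zero hN0⟩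
    hGm hG <| by
      rw [measure_compl (.iUnion hGm) (measure_ne_top ν _),
        measure_iUnion_eq_card_mul hGm hG hGc, Fintype.card_fin, hN, tsub_self]
  refine ⟨D, hDm, hD, hDU, fun k ↦ (measure_congr (hDG k)).trans (hGc k), ?_, ?_⟩
  · simpa using Finset.card_le_card_of_injOn (s := Finset.univ)
      (fun i : Fin m ↦ Fin.castAdd r (Fin.castAdd m' i))
      (fun i _ ↦ by
        simp [measure_congr ((hDG _).diff (ae_eq_refl S)), sdiff_eq_empty.2 (hGS i)])
      ((Fin.castAdd_injective _ _).comp (Fin.castAdd_injective _ _)).injOn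
  · simpa using Finset.card_le_card_of_injOn (s := Finset.univ)
      (fun j : Fin m' ↦ Fin.castAdd r (Fin.natAdd m j))
      (fun j _ ↦ by simp [measure_congr ((hDG _).inter (ae_eq_refl S)),
        (subset_compl_iff_disjoint_right.1 (hGS' j)).inter_eq])
      ((Fin.castAdd_injective _ _).comp (Fin.natAdd_injective _ _)).injOn

end

theorem ENNReal.natFloor_mul_toReal_le {t : ℝ} (ht : 0 ≤ t) (x : ℝ≥0∞) :
    (⌊t * x.toReal⌋₊ : ℝ≥0∞) ≤ ENNReal.ofReal t * x := by
  rcases eq_or_ne x ∞ with rfl | hx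
  · simp
  calc (⌊t * x.toReal⌋₊ : ℝ≥0∞) = ENNReal.ofReal ⌊t * x.toReal⌋₊ := (ofReal_natCast _).symm
    _ ≤ ENNReal.ofReal (t * x.toReal) := ofReal_le_ofReal (Nat.floor_le (by positivity))
    _ = ENNReal.ofReal t * x := by rw [ofReal_mul ht, ofReal_toReal hx]

/-- For an atomless probability measure `ν` and a measurable set `S`, `Ω` can be partitioned
into `2^n` measurable sets of equal measure `2^{-n}` such that at least `⌊2^n ν(S)⌋` of them
are (ν-essentially) contained in `S`, and at least `⌊2^n ν(Ω \ S)⌋` of them are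
(ν-essentially) contained in the complement of `S`. -/
theorem exists_equal_measure_partition_adapted_to_set
    {Ω : Type*} [MeasurableSpace Ω] (ν : Measure Ω) [IsProbabilityMeasure ν]
    (hatomless : ∀ A : Set Ω, MeasurableSet A → 0 < ν A →
      ∃ B ⊆ A, MeasurableSet B ∧ 0 < ν B ∧ ν B < ν A)
    (S : Set Ω) (hS : MeasurableSet S) (n : ℕ) :
    ∃ D : Fin (2 ^ n) → Set Ω,
      (∀ k, MeasurableSet (D k)) ∧
      Pairwise (Function.onFun Disjoint D) ∧
      (⋃ k, D k) = Set.univ ∧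
      (∀ k, ν (D k) = (2 ^ n : ℝ≥0∞)⁻¹) ∧
      ⌊(2 ^ n : ℝ) * (ν S).toReal⌋₊ ≤
        (Finset.univ.filter fun k => ν (D k \ S) = 0).card ∧
      ⌊(2 ^ n : ℝ) * (ν Sᶜ).toReal⌋₊ ≤
        (Finset.univ.filter fun k => ν (D k ∩ S) = 0).card := by
  have h2n : (2 ^ n : ℝ≥0∞) * (2 ^ n)⁻¹ = 1 := ENNReal.mul_inv_cancel (by simp) (by simp)
  have hfloor : ∀ A : Set Ω, (⌊(2 ^ n : ℝ) * (ν A).toReal⌋₊ : ℝ≥0∞) * (2 ^ n)⁻¹ ≤ ν A :=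
    fun A ↦ calc
      _ ≤ (2 ^ n * ν A) * (2 ^ n)⁻¹ := by
        gcongr
        simpa [ENNReal.ofReal_pow] using
          ENNReal.natFloor_mul_toReal_le (t := 2 ^ n) (by positivity) (ν A)
      _ = ν A := by rw [mul_right_comm, h2n, one_mul]
  exact IsAtomless.exists_partition_measure_eq_adapted hatomless hS
    (by simpa [measure_univ] using h2n) (hfloor S) (hfloor Sᶜ)
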